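/- The bilinear forms graph Bil_2(2×2) (on 2×2 matrices over F_2) is isomorphic to the complement of the (4×4)-grid. -/

import Mathlib

/-!
The matrix algebra `M₂(𝔽₂)` splits as `U ⊕ W` with `U = {0, 1, C, C²} ≅ 𝔽₄` (`C = !![0,1;1,1]`)
and `W = {0, !![0,1;1,0], !![1,1;0,1], !![1,0;1,1]}`, and the six invertible matrices are exactly
the nonzero elements of `U ∪ W`. A `2 × 2` matrix has rank one iff it is nonzero and singular,
i.e. iff both of its components are nonzero. So in the coordinates `U × W ≅ Fin 4 × Fin 4`,
two matrices are adjacent in `Bil₂(2 × 2)` iff they differ in both coordinates.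
-/

open SimpleGraph

/-- The bilinear forms graph on `e × d` matrices over a field `F`:
two matrices are adjacent iff their difference has rank 1. -/
def bilGraph (F : Type) [Field F] (e d : ℕ) : SimpleGraph (Matrix (Fin e) (Fin d) F) where
  Adj A B := A ≠ B ∧ (A - B).rank = 1
  symm := by
    constructor
    intro A B h
    refine ⟨h.1.symm, ?_⟩
    have hn : B - A = -(A - B) := by abel
    have hml : (-(A - B)).mulVecLin = -(A - B).mulVecLin := by
      ext v
      simp [Matrix.neg_mulVec]
    have hr : (-(A - B)).rank = (A - B).rank := by
      unfold Matrix.rank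
      rw [hml, LinearMap.range_neg]
    rw [hn, hr]
    exact h.2
  loopless := by constructor; intro A h; exact h.1 rfl

/-- The `(n × m)`-grid: the Cartesian product of the complete graphs `K_n` and `K_m`. -/
def gridGraph (n m : ℕ) : SimpleGraph (Fin n × Fin m) where
  Adj a b := a ≠ b ∧ (a.1 = b.1 ∨ a.2 = b.2)
  symm := by constructor; intro a b h; exact ⟨h.1.symm, h.2.imp Eq.symm Eq.symm⟩
  loopless := by constructor; intro a h; exact h.1 rfl

namespace Matrix
variable {m n K : Type*} [Fintype n] [Field K]

theorem rank_eq_zero_iff (A : Matrix m n K) : A.rank = 0 ↔ A = 0 := by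
  classical
  rw [rank, Submodule.finrank_eq_zero, LinearMap.range_eq_bot, ← toLin'_apply',
    LinearEquiv.map_eq_zero_iff]

theorem rank_eq_card_iff_det_ne_zero [DecidableEq n] (A : Matrix n n K) :
    A.rank = Fintype.card n ↔ A.det ≠ 0 := by
  rw [rank_eq_finrank_span_cols, eq_comm, ← Set.finrank,
    ← linearIndependent_iff_card_eq_finrank_span, linearIndependent_cols_iff_isUnit,
    isUnit_iff_isUnit_det, isUnit_iff_ne_zero]

theorem rank_eq_one_iff_fin_two (A : Matrix (Fin 2) (Fin 2) K) :
    A.rank = 1 ↔ A ≠ 0 ∧ A.det = 0 := by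
  rw [Ne, ← A.rank_eq_zero_iff, ← not_ne_iff (a := A.det), ← A.rank_eq_card_iff_det_ne_zero,
    Fintype.card_fin]
  have := A.rank_le_width
  omega

end Matrix

theorem bilGraph_adj_iff {F : Type} [Field F] {e d : ℕ} {A B : Matrix (Fin e) (Fin d) F} :
    (bilGraph F e d).Adj A B ↔ (A - B).rank = 1 := by
  refine ⟨And.right, fun h => ⟨?_, h⟩⟩
  rintro rfl
  simp [Matrix.rank_zero] at h

theorem compl_gridGraph_adj {n m : ℕ} {a b : Fin n × Fin m} :
    (gridGraph n m)ᶜ.Adj a b ↔ a.1 ≠ b.1 ∧ a.2 ≠ b.2 := by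
  simp only [compl_adj, gridGraph, ne_eq, Prod.ext_iff]
  tauto

-- The components are coordinates of the projections onto `U` along `W` and onto `W` along `U`.
def splitCoords : Matrix (Fin 2) (Fin 2) (ZMod 2) ≃+ (ZMod 2 × ZMod 2) × (ZMod 2 × ZMod 2) where
  toFun M := ((M 0 0 + M 0 1 + M 1 0, M 0 0 + M 1 1), (M 0 0 + M 0 1 + M 1 1, M 0 0 + M 1 0 + M 1 1))
  invFun p := !![p.1.1 + p.2.1 + p.2.2, p.1.2 + p.2.1; p.1.2 + p.2.2, p.1.1 + p.1.2 + p.2.1 + p.2.2]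
  left_inv := by decide
  right_inv := by decide
  map_add' M N := by simp only [Matrix.add_apply, Prod.mk_add_mk]; ring_nf

theorem rank_eq_one_iff_splitCoords (A : Matrix (Fin 2) (Fin 2) (ZMod 2)) :
    A.rank = 1 ↔ (splitCoords A).1 ≠ 0 ∧ (splitCoords A).2 ≠ 0 := by
  rw [Matrix.rank_eq_one_iff_fin_two]
  revert A
  decide

/-- `Bil_2(2 × 2)` is isomorphic to the complement of the `(4 × 4)`-grid. -/
theorem bil2_2x2_is_complement_of_grid :
    Nonempty (bilGraph (ZMod 2) 2 2 ≃g (gridGraph 4 4)ᶜ) := by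
  let f : ZMod 2 × ZMod 2 ≃ Fin 4 := Fintype.equivOfCardEq rfl
  refine ⟨⟨splitCoords.toEquiv.trans (f.prodCongr f), fun {A B} => ?_⟩⟩
  change (gridGraph 4 4)ᶜ.Adj (f.prodCongr f (splitCoords A)) (f.prodCongr f (splitCoords B)) ↔ _
  rw [compl_gridGraph_adj, bilGraph_adj_iff, rank_eq_one_iff_splitCoords, map_sub]
  simp only [Equiv.prodCongr_apply, Prod.map_fst, Prod.map_snd, f.injective.ne_iff,
    Prod.fst_sub, Prod.snd_sub, sub_ne_zero]
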